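/- arXiv:2405.17314 — 2 statements merged into one kernel-verified Lean document; each statement's English description precedes it below -/
import Mathlib

section
/- Let F be a food-web on X and let v, w ∈ X be such that vw is an edge of F, v is not a source of F, and uw is an edge of F for every prey u of v. Then for every S ⊆ X, S is viable in F if and only if S is viable in the food-web F − vw obtained from F by deleting the edge vw. -/
/-- A set `S` of taxa is viable in the food-web `F` (where `F y x` means that
`y` is a prey of `x`) if every member of `S` is a source of `F` or has at least
one prey in `S`. -/
def Viable {X : Type*} (F : X → X → Prop) (S : Set X) : Prop :=
  ∀ x ∈ S, (∀ y, ¬ F y x) ∨ ∃ y ∈ S, F y x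

/-- If `vw` is an edge of `F`, `v` is not a source, and `uw` is an edge for
every prey `u` of `v`, then a set is viable in `F` iff it is viable in the
food-web obtained from `F` by deleting the edge `vw`. -/
theorem stmt_6 {X : Type*} [Fintype X] (F : X → X → Prop)
    (hdag : ∀ x : X, ¬ Relation.TransGen F x x) (v w : X) (hvw : F v w)
    (hv : ∃ u, F u v) (hprey : ∀ u, F u v → F u w) :
    ∀ S : Set X,
      Viable F S ↔ Viable (fun a b => F a b ∧ ¬(a = v ∧ b = w)) S := by
  intro S
  constructor
  · intro hS x hx
    rcases hS x hx with hsrc | ⟨y, hyS, hyx⟩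
    · exact Or.inl fun y h => hsrc y h.1
    · by_cases hc : y = v ∧ x = w
      · obtain ⟨rfl, rfl⟩ := hc
        rcases hS y hyS with hsrc | ⟨u, huS, huv⟩
        · exact absurd hv (by simpa using hsrc)
        · have huv' : u ≠ y := fun h => hdag y (Relation.TransGen.single (h ▸ huv))
          exact Or.inr ⟨u, huS, hprey u huv, fun h => huv' h.1⟩
      · exact Or.inr ⟨y, hyS, hyx, hc⟩
  · intro hS x hx
    rcases hS x hx with hsrc | ⟨y, hyS, hyx⟩
    · by_cases hxw : x = w
      · subst hxw
        obtain ⟨u, huv⟩ := hv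
        have huv' : u ≠ v := fun h => hdag v (Relation.TransGen.single (h ▸ huv))
        exact absurd ⟨hprey u huv, fun h => huv' h.1⟩ (hsrc u)
      · exact Or.inl fun y h => hsrc y ⟨h, fun hc => hxw hc.2⟩
    · exact Or.inr ⟨y, hyS, hyx.1⟩
end

section
/- Let F be a food-web on X and L ⊆ X. Let R be the set of vertices r ∈ X such that every directed path in F from a source of F to r contains a vertex of X \ L. Then every viable set S ⊆ L satisfies S ∩ R = ∅. -/
open Relation

theorem wellFounded_of_forall_not_transGen_self {X : Type*} [Finite X] {F : X → X → Prop}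
    (hF : ∀ x, ¬ TransGen F x x) : WellFounded F :=
  haveI : IsTrans X (TransGen F) := ⟨fun _ _ _ => TransGen.trans⟩
  haveI : Std.Irrefl (TransGen F) := ⟨hF⟩
  Subrelation.wf TransGen.single (Finite.wellFounded_of_trans_of_irrefl _)

theorem List.IsChain.concat_of_getLast? {α : Type*} {R : α → α → Prop} {l : List α} {a b : α}
    (hl : l.IsChain R) (hlast : l.getLast? = some a) (hab : R a b) : (l ++ [b]).IsChain R :=
  hl.append (isChain_singleton b) (by simp [hlast, hab])

theorem Viable.exists_chain_from_source {X : Type*} {F : X → X → Prop} {S : Set X}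
    (hwf : WellFounded F) (hS : Viable F S) {r : X} (hr : r ∈ S) :
    ∃ l : List X, l.IsChain F ∧ (∃ s, l.head? = some s ∧ ∀ y, ¬ F y s) ∧
      l.getLast? = some r ∧ ∀ v ∈ l, v ∈ S := by
  induction r using hwf.induction with
  | _ r ih =>
    rcases hS r hr with hsource | ⟨y, hyS, hyr⟩
    · exact ⟨[r], List.isChain_singleton r, ⟨r, rfl, hsource⟩, rfl, by simpa using hr⟩
    · obtain ⟨l, hchain, ⟨s, hhead, hsource⟩, hlast, hmem⟩ := ih y hyr hyS
      have hne : l ≠ [] := by rintro rfl; simp at hlast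
      refine ⟨l ++ [r], hchain.concat_of_getLast? hlast hyr, ⟨s, ?_, hsource⟩, by simp, ?_⟩
      · rwa [List.head?_append_of_ne_nil _ hne]
      · simpa [or_imp, forall_and] using ⟨hmem, hr⟩

/-- Let `R` be the set of taxa `r` such that every directed path in `F` from a
source of `F` to `r` contains a vertex outside `L`.  Then every viable set
`S ⊆ L` satisfies `S ∩ R = ∅`. -/
theorem stmt_10 {X : Type*} [Fintype X] (F : X → X → Prop)
    (hdag : ∀ x : X, ¬ Relation.TransGen F x x) (L : Set X) :
    ∀ S : Set X, S ⊆ L → Viable F S →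
      S ∩ {r : X | ∀ l : List X, l.Chain' F →
          (∃ s, l.head? = some s ∧ ∀ y, ¬ F y s) →
          l.getLast? = some r → ∃ v ∈ l, v ∉ L} = ∅ := by
  intro S hSL hS
  refine Set.eq_empty_iff_forall_notMem.2 fun r ⟨hrS, hrR⟩ => ?_
  obtain ⟨l, hchain, hsource, hlast, hmem⟩ :=
    hS.exists_chain_from_source (wellFounded_of_forall_not_transGen_self hdag) hrS
  obtain ⟨v, hv, hvL⟩ := hrR l hchain hsource hlast
  exact hvL (hSL (hmem v hv))
end
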